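/- A proper matchable FR-partition of a 3-partite 3-graph has the edge-home property (and is therefore a home-base partition). -/

import Mathlib

noncomputable section

attribute [local instance] Classical.propDecidable

universe u

variable {α : Type u}

/-- A 3-partite 3-uniform multihypergraph: vertex classes `V1, V2, V3` and a
multiset of edges, each edge being a triple with one vertex in each class
(parallel edges are allowed via multiplicities). -/
structure TriSys (α : Type u) where
  V1 : Finset α
  V2 : Finset α
  V3 : Finset α
  h12 : Disjoint V1 V2
  h13 : Disjoint V1 V3
  h23 : Disjoint V2 V3
  edges : Multiset (α × α × α)
  mem1 : ∀ e ∈ edges, e.1 ∈ V1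
  mem2 : ∀ e ∈ edges, e.2.1 ∈ V2
  mem3 : ∀ e ∈ edges, e.2.2 ∈ V3

/-- The vertex set of an edge. -/
def evset (e : α × α × α) : Finset α := {e.1, e.2.1, e.2.2}

/-- The coordinates of an edge, indexed by `Fin 3`. -/
def ecoord (e : α × α × α) : Fin 3 → α := ![e.1, e.2.1, e.2.2]

namespace TriSys

def verts (H : TriSys α) : Finset α := H.V1 ∪ H.V2 ∪ H.V3

/-- The vertex classes, indexed by `Fin 3`. -/
def cls (H : TriSys α) : Fin 3 → Finset α := ![H.V1, H.V2, H.V3]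

/-- A matching: a set of (pairwise vertex-disjoint) edges. -/
def IsMatching (H : TriSys α) (M : Finset (α × α × α)) : Prop :=
  (∀ e ∈ M, e ∈ H.edges) ∧
  (↑M : Set (α × α × α)).Pairwise fun e f => Disjoint (evset e) (evset f)

/-- The matching number ν. -/
def nu (H : TriSys α) : ℕ :=
  sSup {n : ℕ | ∃ M : Finset (α × α × α), H.IsMatching M ∧ M.card = n}

/-- A vertex cover: a set of vertices meeting every edge. -/
def IsCover (H : TriSys α) (T : Finset α) : Prop :=
  ∀ e ∈ H.edges, ∃ v ∈ T, v ∈ evset e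

/-- The vertex cover number τ. -/
def tau (H : TriSys α) : ℕ :=
  sInf {n : ℕ | ∃ T : Finset α, H.IsCover T ∧ T.card = n}

/-- Deletion of a set of vertices (and all edges meeting it). -/
def delete (H : TriSys α) (S : Finset α) : TriSys α where
  V1 := H.V1 \ S
  V2 := H.V2 \ S
  V3 := H.V3 \ S
  h12 := H.h12.mono Finset.sdiff_subset Finset.sdiff_subset
  h13 := H.h13.mono Finset.sdiff_subset Finset.sdiff_subset
  h23 := H.h23.mono Finset.sdiff_subset Finset.sdiff_subset
  edges := H.edges.filter fun e => e.1 ∉ S ∧ e.2.1 ∉ S ∧ e.2.2 ∉ S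
  mem1 := fun e he => by
    rw [Multiset.mem_filter] at he
    exact Finset.mem_sdiff.mpr ⟨H.mem1 e he.1, he.2.1⟩
  mem2 := fun e he => by
    rw [Multiset.mem_filter] at he
    exact Finset.mem_sdiff.mpr ⟨H.mem2 e he.1, he.2.2.1⟩
  mem3 := fun e he => by
    rw [Multiset.mem_filter] at he
    exact Finset.mem_sdiff.mpr ⟨H.mem3 e he.1, he.2.2.2⟩

end TriSys

/-- The four edges of a truncated Fano plane on vertices `a,b,c,x,y,z`
(with classes `{a,x} ⊆ V1`, `{b,y} ⊆ V2`, `{c,z} ⊆ V3`). -/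
def FanoEdges (a b c x y z : α) : Finset (α × α × α) :=
  {(a, b, c), (a, y, z), (x, b, z), (x, y, c)}

/-- The supports of the edges of `H` induced on a vertex subset `F`. -/
def inducedEdges (H : TriSys α) (F : Finset α) : Finset (α × α × α) :=
  (H.edges.filter fun e => evset e ⊆ F).toFinset

/-- `H` induces a truncated multi-Fano plane on the six-element set `F`. -/
def IsMultiFano (H : TriSys α) (F : Finset α) : Prop :=
  ∃ a b c x y z : α,
    a ∈ H.V1 ∧ x ∈ H.V1 ∧ b ∈ H.V2 ∧ y ∈ H.V2 ∧ c ∈ H.V3 ∧ z ∈ H.V3 ∧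
    a ≠ x ∧ b ≠ y ∧ c ≠ z ∧
    F = {a, b, c, x, y, z} ∧
    inducedEdges H F = FanoEdges a b c x y z

/-- The data of an FR-partition: the families `𝓕` and `𝓡` and the set `W`. -/
structure FRData (α : Type u) where
  Ffam : Finset (Finset α)
  Rfam : Finset (Finset α)
  W : Finset α

/-- The union of the members of a family of sets. -/
def famUnion (G : Finset (Finset α)) : Finset α := G.biUnion id

/-- `(𝓕, 𝓡, W)` is an FR-partition of `H`. -/
def IsFRPartition (H : TriSys α) (P : FRData α) : Prop :=
  (∀ A ∈ P.Ffam, ∀ B ∈ P.Ffam, A ≠ B → Disjoint A B) ∧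
  (∀ A ∈ P.Rfam, ∀ B ∈ P.Rfam, A ≠ B → Disjoint A B) ∧
  (∀ A ∈ P.Ffam, ∀ B ∈ P.Rfam, Disjoint A B) ∧
  (∀ A ∈ P.Ffam, Disjoint A P.W) ∧
  (∀ B ∈ P.Rfam, Disjoint B P.W) ∧
  famUnion P.Ffam ∪ famUnion P.Rfam ∪ P.W = H.verts ∧
  (∀ A ∈ P.Ffam, IsMultiFano H A) ∧
  (∀ B ∈ P.Rfam, ∃ r1 ∈ H.V1, ∃ r2 ∈ H.V2, ∃ r3 ∈ H.V3, B = {r1, r2, r3}) ∧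
  P.Ffam.card + P.Rfam.card = H.nu

/-- `w` is joined to `R` in the auxiliary bipartite graph `B_i`: some edge of
`H` contains `w` and two vertices of `R`. -/
def RAdj (H : TriSys α) (R : Finset α) (w : α) : Prop :=
  ∃ e ∈ H.edges, w ∈ evset e ∧ 2 ≤ (evset e ∩ R).card

/-- The auxiliary bipartite graph on `Rfam` and `Wi` has a matching
saturating `Rfam`. -/
def SaturatingR (H : TriSys α) (Rfam : Finset (Finset α)) (Wi : Finset α) : Prop :=
  ∃ f : Finset α → α, Set.InjOn f ↑Rfam ∧ ∀ R ∈ Rfam, f R ∈ Wi ∧ RAdj H R (f R)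

/-- Matchability of an FR-partition. -/
def IsMatchable (H : TriSys α) (P : FRData α) : Prop :=
  ∀ i : Fin 3, SaturatingR H P.Rfam (P.W ∩ H.cls i)

/-- The edge-home property: every edge is an `F`-edge or an `R`-edge. -/
def EdgeHome (H : TriSys α) (P : FRData α) : Prop :=
  ∀ e ∈ H.edges,
    (∃ A ∈ P.Ffam, evset e ⊆ A) ∨ (∃ B ∈ P.Rfam, 2 ≤ (evset e ∩ B).card)

/-- A home-base partition: a matchable FR-partition with the edge-home
property. -/
def IsHomeBasePartition (H : TriSys α) (P : FRData α) : Prop :=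
  IsFRPartition H P ∧ IsMatchable H P ∧ EdgeHome H P

/-- A home-base hypergraph: one admitting a home-base partition. -/
def IsHomeBase (H : TriSys α) : Prop :=
  ∃ P : FRData α, IsHomeBasePartition H P

/-- The neighborhood of a family `U` of `R`'s in the auxiliary bipartite
graph with `W`-side `Wi`. -/
def RNbhd (H : TriSys α) (Wi : Finset α) (U : Finset (Finset α)) : Finset α :=
  Wi.filter fun w => ∃ R ∈ U, RAdj H R w

/-- `C` is an essential subset of `Wi` in the auxiliary bipartite graph:
`C = N(U)` for some `U ⊆ Rfam` with `|U| = |C|`. -/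
def EssentialSet (H : TriSys α) (Rfam : Finset (Finset α)) (Wi : Finset α)
    (C : Finset α) : Prop :=
  ∃ U ⊆ Rfam, U.card = C.card ∧ RNbhd H Wi U = C

/-- `w` is a superfluous vertex of `Wi`: it lies in no essential subset
(equivalently, outside the maximal essential subset). -/
def Superfluous (H : TriSys α) (Rfam : Finset (Finset α)) (Wi : Finset α)
    (w : α) : Prop :=
  w ∈ Wi ∧ ∀ C, EssentialSet H Rfam Wi C → w ∉ C

/-- `w` is a superfluous `W`-vertex of the FR-partition `P` (in its class). -/
def SuperfluousVert (H : TriSys α) (P : FRData α) (w : α) : Prop :=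
  ∃ i : Fin 3, Superfluous H P.Rfam (P.W ∩ H.cls i) w

/-- `v` is an essential `W`-vertex of the FR-partition `P`. -/
def EssentialVertIn (H : TriSys α) (P : FRData α) (v : α) : Prop :=
  ∃ i : Fin 3, EssentialSet H P.Rfam (P.W ∩ H.cls i) {v}

/-- `v` is essential for `R`: it is the unique neighbor of `R` in some `B_i`. -/
def EssentialForIn (H : TriSys α) (P : FRData α) (R : Finset α) (v : α) : Prop :=
  ∃ i : Fin 3, RNbhd H (P.W ∩ H.cls i) {R} = {v}

/-- The neighborhood, inside vertex class `j`, of a set `X` of class-`k`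
vertices in the link graph of `H` over the remaining vertex class. -/
def nbr (H : TriSys α) (j k : Fin 3) (X : Finset α) : Finset α :=
  (H.cls j).filter fun v => ∃ e ∈ H.edges, ecoord e j = v ∧ ecoord e k ∈ X

/-- A cromulent triple `(Y1, Y2, X)` with `Y1 ⊆ V_i`, `Y2 ⊆ V_j`, `X ⊆ V_k`. -/
def IsCromulent (H : TriSys α) (i j k : Fin 3) (Y1 Y2 X : Finset α) : Prop :=
  i ≠ j ∧ i ≠ k ∧ j ≠ k ∧
  Y1.Nonempty ∧ Y2.Nonempty ∧ X.Nonempty ∧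
  Y1 ⊆ H.cls i ∧ Y2 ⊆ H.cls j ∧ X ⊆ H.cls k ∧
  Y1.card = Y2.card ∧ Y1.card ≤ X.card ∧
  nbr H j k X = Y2 ∧
  (∃ M : Finset (α × α × α), H.IsMatching M ∧ M.card = Y1.card ∧
    ∀ e ∈ M, evset e ⊆ Y1 ∪ Y2 ∪ X) ∧
  IsHomeBase (H.delete (Y1 ∪ Y2 ∪ X)) ∧
  (H.delete (Y1 ∪ Y2 ∪ X)).nu + Y1.card = H.nu ∧
  ∀ P : FRData α, IsHomeBasePartition (H.delete (Y1 ∪ Y2 ∪ X)) P →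
    nbr H i k X ⊆ Y1 ∪ famUnion P.Rfam ∪ famUnion P.Ffam

/-- A perfectly cromulent triple: condition (5) is strengthened to
`N_{Lk_{V_j}}(X) = Y1`. -/
def IsPerfCromulent (H : TriSys α) (i j k : Fin 3) (Y1 Y2 X : Finset α) : Prop :=
  i ≠ j ∧ i ≠ k ∧ j ≠ k ∧
  Y1.Nonempty ∧ Y2.Nonempty ∧ X.Nonempty ∧
  Y1 ⊆ H.cls i ∧ Y2 ⊆ H.cls j ∧ X ⊆ H.cls k ∧
  Y1.card = Y2.card ∧ Y1.card ≤ X.card ∧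
  nbr H j k X = Y2 ∧
  (∃ M : Finset (α × α × α), H.IsMatching M ∧ M.card = Y1.card ∧
    ∀ e ∈ M, evset e ⊆ Y1 ∪ Y2 ∪ X) ∧
  IsHomeBase (H.delete (Y1 ∪ Y2 ∪ X)) ∧
  (H.delete (Y1 ∪ Y2 ∪ X)).nu + Y1.card = H.nu ∧
  nbr H i k X = Y1

/-- The link graph of `H` over the class other than `j, k` has a perfect
matching, encoded as a bijection from class `j` onto class `k` realized by
edges of `H`. -/
def LinkPerfectMatching (H : TriSys α) (j k : Fin 3) : Prop :=
  ∃ f : α → α, Set.InjOn f ↑(H.cls j) ∧ (H.cls j).image f = H.cls k ∧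
    ∀ v ∈ H.cls j, ∃ e ∈ H.edges, ecoord e j = v ∧ ecoord e k = f v

/-- A proper FR-partition: no `R ∈ 𝓡` together with an edge consisting of
three `W`-vertices induces a truncated (multi-)Fano plane. -/
def IsProper (H : TriSys α) (P : FRData α) : Prop :=
  ¬ ∃ R ∈ P.Rfam, ∃ e ∈ H.edges, evset e ⊆ P.W ∧ IsMultiFano H (R ∪ evset e)

/-!
Suppose an edge `e` has no home, and let `f i` (`i = 0, 1, 2`) be saturating matchings of the
graphs `B_i`. Enlarge each `R ∈ 𝓡` to the block `R ∪ {f₀ R, f₁ R, f₂ R}`; these blocks and the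
members of `𝓕` are pairwise disjoint. Every `F ∈ 𝓕` contains a Fano edge avoiding `e`, and every
enlarged `R` contains an edge of some `B_i` avoiding `e`, unless `f R = e`. If no `R` has
`f R = e`, these edges together with `e` form a matching of size `ν + 1`. Otherwise there is
exactly one such `R`, its block is `R ∪ e`, and `e` together with the three `B_i`-edges of `R`
form a truncated Fano plane on `R ∪ e`. Properness yields a further edge on `R ∪ e`, which is
disjoint from its complementary Fano edge; these two edges and the edges of the other blocks
again form a matching of size `ν + 1`.
-/

open Finset

lemma ecoord_injective : Function.Injective (ecoord : α × α × α → Fin 3 → α) := by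
  intro s t h
  have h0 := congrFun h 0
  have h1 := congrFun h 1
  have h2 := congrFun h 2
  simp only [ecoord, Matrix.cons_val] at h0 h1 h2
  ext <;> assumption

lemma evset_eq_image_ecoord (t : α × α × α) : evset t = univ.image (ecoord t) := by
  ext x
  simp [evset, ecoord, Fin.exists_fin_succ, eq_comm]

lemma mem_evset_iff {t : α × α × α} {x : α} : x ∈ evset t ↔ ∃ i, ecoord t i = x := by
  simp [evset_eq_image_ecoord]

lemma evset_nonempty (d : α × α × α) : (evset d).Nonempty := ⟨d.1, by simp [evset]⟩

lemma ne_of_disjoint_evset {g g' : α × α × α} (hgg' : Disjoint (evset g) (evset g')) :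
    g ≠ g' := by
  rintro rfl
  exact (evset_nonempty g).ne_empty (disjoint_self.mp hgg')

namespace TriSys

lemma disjoint_cls (H : TriSys α) {i j : Fin 3} (hij : i ≠ j) :
    Disjoint (H.cls i) (H.cls j) := by
  have := H.h12; have := H.h13; have := H.h23
  fin_cases i <;> fin_cases j <;> simp_all [cls, disjoint_comm]

def IsTransversal (H : TriSys α) (t : α × α × α) : Prop := ∀ i, ecoord t i ∈ H.cls i

variable {H : TriSys α}

lemma isTransversal_of_mem_edges {e : α × α × α} (he : e ∈ H.edges) : H.IsTransversal e := by
  intro i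
  fin_cases i
  exacts [H.mem1 e he, H.mem2 e he, H.mem3 e he]

lemma eq_of_mem_cls {u v : α} {i j : Fin 3} (hu : u ∈ H.cls i) (hv : v ∈ H.cls j)
    (huv : u = v) : i = j := by
  by_contra hij
  exact disjoint_left.mp (H.disjoint_cls hij) hu (huv ▸ hv)

namespace IsTransversal

variable {s t : α × α × α}

lemma eq_ecoord_of_mem {x : α} {i : Fin 3} (ht : H.IsTransversal t) (hx : x ∈ evset t)
    (hxi : x ∈ H.cls i) : x = ecoord t i := by
  obtain ⟨j, rfl⟩ := mem_evset_iff.mp hx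
  rw [eq_of_mem_cls (ht j) hxi rfl]

lemma ecoord_injective (ht : H.IsTransversal t) : Function.Injective (ecoord t) :=
  fun i j hij => eq_of_mem_cls (ht i) (ht j) hij

lemma evset_inter_evset (hs : H.IsTransversal s) (ht : H.IsTransversal t) :
    evset s ∩ evset t = (univ.filter fun i => ecoord s i = ecoord t i).image (ecoord s) := by
  ext x
  simp only [mem_inter, mem_image, mem_filter, mem_univ, true_and]
  constructor
  · rintro ⟨hxs, hxt⟩
    obtain ⟨i, rfl⟩ := mem_evset_iff.mp hxs
    exact ⟨i, ht.eq_ecoord_of_mem hxt (hs i), rfl⟩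
  · rintro ⟨i, hi, rfl⟩
    exact ⟨mem_evset_iff.mpr ⟨i, rfl⟩, mem_evset_iff.mpr ⟨i, hi.symm⟩⟩

lemma card_evset_inter (hs : H.IsTransversal s) (ht : H.IsTransversal t) :
    (evset s ∩ evset t).card = (univ.filter fun i => ecoord s i = ecoord t i).card := by
  rw [evset_inter_evset hs ht, card_image_of_injective _ hs.ecoord_injective]

lemma disjoint_evset_iff (hs : H.IsTransversal s) (ht : H.IsTransversal t) :
    Disjoint (evset s) (evset t) ↔ ∀ i, ecoord s i ≠ ecoord t i := by
  rw [disjoint_iff_inter_eq_empty, evset_inter_evset hs ht, image_eq_empty, filter_eq_empty_iff]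
  simp

lemma mem_evset_union_iff (hs : H.IsTransversal s) (ht : H.IsTransversal t) {x : α}
    {i : Fin 3} (hx : x ∈ H.cls i) :
    x ∈ evset s ∪ evset t ↔ x = ecoord s i ∨ x = ecoord t i := by
  constructor
  · intro h
    rcases mem_union.mp h with h | h
    exacts [Or.inl (hs.eq_ecoord_of_mem h hx), Or.inr (ht.eq_ecoord_of_mem h hx)]
  · rintro (rfl | rfl)
    exacts [mem_union_left _ (mem_evset_iff.mpr ⟨i, rfl⟩),
      mem_union_right _ (mem_evset_iff.mpr ⟨i, rfl⟩)]

end IsTransversal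

lemma exists_edge_ecoord_eq_update_of_rAdj {r : α × α × α} (hr : H.IsTransversal r)
    {i : Fin 3} {w : α} (hw : w ∈ H.cls i) (hwr : w ∉ evset r) (hadj : RAdj H (evset r) w) :
    ∃ d ∈ H.edges, ecoord d = Function.update (ecoord r) i w := by
  obtain ⟨d, hd, hwd, h2⟩ := hadj
  have hdT := isTransversal_of_mem_edges hd
  have hdi : ecoord d i = w := (hdT.eq_ecoord_of_mem hwd hw).symm
  have hagree : (univ.filter fun j => ecoord d j = ecoord r j) = univ.erase i := by
    refine eq_of_subset_of_card_le (fun j hj => mem_erase.mpr ⟨?_, mem_univ j⟩) ?_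
    · rintro rfl
      exact hwr (mem_evset_iff.mpr ⟨j, hdi ▸ (mem_filter.mp hj).2.symm⟩)
    · rw [← hdT.card_evset_inter hr, card_erase_of_mem (mem_univ i)]
      simpa using h2
  refine ⟨d, hd, funext fun j => ?_⟩
  rcases eq_or_ne j i with rfl | hji
  · simp [hdi]
  · rw [Function.update_of_ne hji]
    have hj : j ∈ univ.erase i := mem_erase.mpr ⟨hji, mem_univ j⟩
    rw [← hagree, mem_filter] at hj
    exact hj.2

lemma isMatching_singleton {e : α × α × α} (he : e ∈ H.edges) : H.IsMatching {e} :=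
  ⟨fun g hg => mem_singleton.mp hg ▸ he, by simp⟩

lemma isMatching_pair {g g' : α × α × α} (hg : g ∈ H.edges) (hg' : g' ∈ H.edges)
    (hgg' : Disjoint (evset g) (evset g')) : H.IsMatching {g, g'} := by
  refine ⟨fun d hd => ?_, ?_⟩
  · rcases mem_insert.mp hd with rfl | hd
    exacts [hg, mem_singleton.mp hd ▸ hg']
  · rw [coe_pair]
    exact Set.pairwise_pair.mpr fun _ => ⟨hgg', hgg'.symm⟩

lemma IsMatching.card_le_nu {M : Finset (α × α × α)} (hM : H.IsMatching M) : M.card ≤ H.nu := by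
  refine le_csSup ⟨H.edges.toFinset.card, ?_⟩ ⟨M, hM, rfl⟩
  rintro n ⟨M', hM', rfl⟩
  exact card_le_card fun d hd => Multiset.mem_toFinset.mpr (hM'.1 d hd)

lemma card_add_card_le_nu {ι : Type*} {M : Finset (α × α × α)} (hM : H.IsMatching M)
    {s : Finset ι} {B : ι → Finset α} (hB : (s : Set ι).PairwiseDisjoint B)
    (hedge : ∀ k ∈ s, ∃ d ∈ H.edges, evset d ⊆ B k)
    (hMB : ∀ g ∈ M, ∀ k ∈ s, Disjoint (evset g) (B k)) :
    M.card + s.card ≤ H.nu := by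
  obtain rfl | ⟨k₀, hk₀⟩ := s.eq_empty_or_nonempty
  · simpa using hM.card_le_nu
  have : Nonempty (α × α × α) := ⟨(hedge k₀ hk₀).choose⟩
  choose! d hd hdB using hedge
  have hdisj : (s : Set ι).PairwiseDisjoint (evset ∘ d) :=
    fun k hk l hl hkl => (hB hk hl hkl).mono (hdB k hk) (hdB l hl)
  have hinj : Set.InjOn d s := fun k hk l hl hkl => by
    by_contra hne
    exact ne_of_disjoint_evset (hdisj hk hl hne) hkl
  have hMd : ∀ g ∈ M, ∀ k ∈ s, Disjoint (evset g) (evset (d k)) :=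
    fun g hg k hk => (hMB g hg k hk).mono_right (hdB k hk)
  have hmatch : H.IsMatching (M ∪ s.image d) := by
    refine ⟨fun g hg => ?_, ?_⟩
    · rcases mem_union.mp hg with hg | hg
      · exact hM.1 g hg
      · obtain ⟨k, hk, rfl⟩ := mem_image.mp hg
        exact hd k hk
    · show ((M ∪ s.image d : Finset _) : Set (α × α × α)).PairwiseDisjoint evset
      rw [coe_union, coe_image]
      refine Set.PairwiseDisjoint.union hM.2 (hinj.pairwiseDisjoint_image.mpr hdisj) ?_
      rintro g hg _ ⟨k, hk, rfl⟩ -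
      exact hMd g hg k hk
  have hMd' : Disjoint M (s.image d) := by
    refine disjoint_left.mpr fun g hg hg' => ?_
    obtain ⟨k, hk, rfl⟩ := mem_image.mp hg'
    exact ne_of_disjoint_evset (hMd _ hg k hk) rfl
  calc M.card + s.card = (M ∪ s.image d).card := by
        rw [card_union_of_disjoint hMd', card_image_of_injOn hinj]
    _ ≤ H.nu := hmatch.card_le_nu

lemma exists_edge_subset_sdiff_of_isMultiFano {F : Finset α} (hF : IsMultiFano H F)
    {e : α × α × α} (he : e ∈ H.edges) (heF : ¬ evset e ⊆ F) :
    ∃ d ∈ H.edges, evset d ⊆ F \ evset e := by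
  obtain ⟨a, b, c, x, y, z, -, -, -, -, -, -, hax, hby, hcz, rfl, hind⟩ := hF
  have hfano : ∀ d ∈ FanoEdges a b c x y z, d ∈ H.edges ∧ evset d ⊆ {a, b, c, x, y, z} := by
    intro d hd
    rwa [← hind, inducedEdges, Multiset.mem_toFinset, Multiset.mem_filter] at hd
  have hout : ¬ ((e.1 = a ∨ e.1 = x) ∧ (e.2.1 = b ∨ e.2.1 = y) ∧ (e.2.2 = c ∨ e.2.2 = z)) := by
    rintro ⟨h1, h2, h3⟩
    apply heF
    intro u hu
    simp only [evset, mem_insert, mem_singleton] at hu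
    rcases hu with rfl | rfl | rfl <;> simp only [mem_insert, mem_singleton] <;> tauto
  obtain ⟨d, hd, hde⟩ :
      ∃ d ∈ FanoEdges a b c x y z, d.1 ≠ e.1 ∧ d.2.1 ≠ e.2.1 ∧ d.2.2 ≠ e.2.2 := by
    -- `e` misses one of the pairs `{a, x}`, `{b, y}`, `{c, z}`: avoid `e` in the other two
    -- coordinates, and the Fano parity fixes the remaining one.
    simp only [FanoEdges, mem_insert, mem_singleton, exists_eq_or_imp, exists_eq_left]
    grind
  obtain ⟨hdE, hdF⟩ := hfano d hd
  refine ⟨d, hdE, subset_sdiff.mpr ⟨hdF, ?_⟩⟩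
  rw [(isTransversal_of_mem_edges hdE).disjoint_evset_iff (isTransversal_of_mem_edges he)]
  simpa [Fin.forall_fin_succ, ecoord] using hde

lemma fanoEdges_subset_inducedEdges {r e : α × α × α} (hr : H.IsTransversal r)
    (he : e ∈ H.edges) (her : ∀ i, ecoord e i ∉ evset r)
    (hadj : ∀ i, RAdj H (evset r) (ecoord e i)) :
    FanoEdges e.1 e.2.1 e.2.2 r.1 r.2.1 r.2.2 ⊆ inducedEdges H (evset e ∪ evset r) := by
  have heT := isTransversal_of_mem_edges he
  have hupdate (i : Fin 3) (d : α × α × α)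
      (hd : ecoord d = Function.update (ecoord r) i (ecoord e i)) : d ∈ H.edges := by
    obtain ⟨d', hd', hd'r⟩ := exists_edge_ecoord_eq_update_of_rAdj hr (heT i) (her i) (hadj i)
    rwa [ecoord_injective (hd'r.trans hd.symm)] at hd'
  intro d hd
  rw [inducedEdges, Multiset.mem_toFinset, Multiset.mem_filter]
  simp only [FanoEdges, mem_insert, mem_singleton] at hd
  refine ⟨?_, ?_⟩
  · rcases hd with rfl | rfl | rfl | rfl
    · exact he
    · exact hupdate 0 _ (by funext j; fin_cases j <;> rfl)
    · exact hupdate 1 _ (by funext j; fin_cases j <;> rfl)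
    · exact hupdate 2 _ (by funext j; fin_cases j <;> rfl)
  · rcases hd with rfl | rfl | rfl | rfl <;> intro u hu <;>
      simp only [evset, mem_union, mem_insert, mem_singleton] at hu ⊢ <;> tauto

/-- The edges of a truncated Fano plane on `evset s ∪ evset t` are the transversals taking an
even number of coordinates from `t`; the vertex-complement of any other transversal is one of
them. -/
lemma exists_disjoint_edges_of_fanoEdges_ssubset {s t : α × α × α} (hs : H.IsTransversal s)
    (ht : H.IsTransversal t) (hst : ∀ i, ecoord s i ≠ ecoord t i)
    (h : FanoEdges s.1 s.2.1 s.2.2 t.1 t.2.1 t.2.2 ⊂ inducedEdges H (evset s ∪ evset t)) :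
    ∃ g ∈ H.edges, ∃ g' ∈ H.edges, evset g ⊆ evset s ∪ evset t ∧
      evset g' ⊆ evset s ∪ evset t ∧ Disjoint (evset g) (evset g') := by
  have hinduced {d : α × α × α} : d ∈ inducedEdges H (evset s ∪ evset t) ↔
      d ∈ H.edges ∧ evset d ⊆ evset s ∪ evset t := by
    rw [inducedEdges, Multiset.mem_toFinset, Multiset.mem_filter]
  obtain ⟨g, hg, hgF⟩ := exists_of_ssubset h
  obtain ⟨hgE, hgS⟩ := hinduced.mp hg
  have hgT := isTransversal_of_mem_edges hgE
  have hcoord (i : Fin 3) : ecoord g i = ecoord s i ∨ ecoord g i = ecoord t i :=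
    (hs.mem_evset_union_iff ht (hgT i)).mp (hgS (mem_evset_iff.mpr ⟨i, rfl⟩))
  let other (i : Fin 3) : α := if ecoord g i = ecoord s i then ecoord t i else ecoord s i
  have hother (i : Fin 3) : ecoord g i ≠ other i := by
    simp only [other]
    split_ifs with h
    · exact h ▸ hst i
    · exact h
  have hg' : (other 0, other 1, other 2) ∈ FanoEdges s.1 s.2.1 s.2.2 t.1 t.2.1 t.2.2 := by
    have h0 := hst 0; have h1 := hst 1; have h2 := hst 2
    obtain ⟨g1, g2, g3⟩ := g
    simp only [other, ecoord, Matrix.cons_val] at hcoord h0 h1 h2 ⊢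
    rcases hcoord 0 with rfl | rfl <;> rcases hcoord 1 with rfl | rfl <;>
      rcases hcoord 2 with rfl | rfl <;> simp_all [FanoEdges, Ne.symm]
  obtain ⟨hg'E, hg'S⟩ := hinduced.mp (h.subset hg')
  refine ⟨g, hgE, _, hg'E, hgS, hg'S, ?_⟩
  rw [hgT.disjoint_evset_iff (isTransversal_of_mem_edges hg'E)]
  intro i
  fin_cases i
  exacts [hother 0, hother 1, hother 2]

end TriSys

/-- Saturating matchings of the three auxiliary graphs `B_i`: `f i R` is the partner of `R`
in `B_i`. -/
def IsSaturatingTriple (H : TriSys α) (P : FRData α) (f : Fin 3 → Finset α → α) : Prop :=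
  ∀ i, Set.InjOn (f i) P.Rfam ∧ ∀ R ∈ P.Rfam, f i R ∈ P.W ∩ H.cls i ∧ RAdj H R (f i R)

def rBlock (f : Fin 3 → Finset α → α) (R : Finset α) : Finset α := R ∪ univ.image (f · R)

def block (f : Fin 3 → Finset α → α) : Finset α ⊕ Finset α → Finset α := Sum.elim id (rBlock f)

namespace IsFRPartition

variable {H : TriSys α} {P : FRData α} {f : Fin 3 → Finset α → α} {e : α × α × α}

lemma exists_isTransversal (hFR : IsFRPartition H P) {R : Finset α} (hR : R ∈ P.Rfam) :
    ∃ r, H.IsTransversal r ∧ R = evset r := by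
  obtain ⟨r1, hr1, r2, hr2, r3, hr3, rfl⟩ := hFR.2.2.2.2.2.2.2.1 R hR
  refine ⟨(r1, r2, r3), fun i => ?_, rfl⟩
  fin_cases i
  exacts [hr1, hr2, hr3]

lemma notMem_of_mem_W (hFR : IsFRPartition H P) {R : Finset α} (hR : R ∈ P.Rfam) {u : α}
    (hu : u ∈ P.W) : u ∉ R :=
  disjoint_right.mp (hFR.2.2.2.2.1 R hR) hu

lemma image_subset_W (hf : IsSaturatingTriple H P f) {R : Finset α} (hR : R ∈ P.Rfam) :
    univ.image (f · R) ⊆ P.W :=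
  image_subset_iff.mpr fun i _ => (mem_inter.mp ((hf i).2 R hR).1).1

lemma disjoint_image (hf : IsSaturatingTriple H P f) {R R' : Finset α} (hR : R ∈ P.Rfam)
    (hR' : R' ∈ P.Rfam) (hne : R ≠ R') :
    Disjoint (univ.image (f · R)) (univ.image (f · R')) := by
  refine disjoint_left.mpr fun u hu hu' => hne ?_
  obtain ⟨i, -, rfl⟩ := mem_image.mp hu
  obtain ⟨j, -, hji⟩ := mem_image.mp hu'
  have hij : i = j := TriSys.eq_of_mem_cls (mem_inter.mp ((hf i).2 R hR).1).2
    (mem_inter.mp ((hf j).2 R' hR').1).2 hji.symm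
  subst hij
  exact (hf i).1 hR hR' hji.symm

lemma pairwiseDisjoint_block (hFR : IsFRPartition H P) (hf : IsSaturatingTriple H P f) :
    (P.Ffam.disjSum P.Rfam : Set (Finset α ⊕ Finset α)).PairwiseDisjoint (block f) := by
  obtain ⟨hFF, hRR, hFR, hFW, hRW, -⟩ := hFR
  have hFrBlock {A R : Finset α} (hA : A ∈ P.Ffam) (hR : R ∈ P.Rfam) :
      Disjoint A (rBlock f R) :=
    disjoint_union_right.mpr ⟨hFR A hA R hR, (hFW A hA).mono_right (image_subset_W hf hR)⟩
  rintro (A | R) hk (B | R') hl hne <;> rw [mem_coe] at hk hl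
  · exact hFF A (inl_mem_disjSum.mp hk) B (inl_mem_disjSum.mp hl) fun h => hne (h ▸ rfl)
  · exact hFrBlock (inl_mem_disjSum.mp hk) (inr_mem_disjSum.mp hl)
  · exact (hFrBlock (inl_mem_disjSum.mp hl) (inr_mem_disjSum.mp hk)).symm
  · replace hk := inr_mem_disjSum.mp hk
    replace hl := inr_mem_disjSum.mp hl
    have hRR' : R ≠ R' := fun h => hne (h ▸ rfl)
    refine disjoint_union_left.mpr ⟨disjoint_union_right.mpr ⟨hRR R hk R' hl hRR', ?_⟩,
      disjoint_union_right.mpr ⟨?_, disjoint_image hf hk hl hRR'⟩⟩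
    · exact (hRW R hk).mono_right (image_subset_W hf hl)
    · exact ((hRW R' hl).mono_right (image_subset_W hf hk)).symm

/-- The edge is the `B_i`-edge joining `R` to `f i R`, for a coordinate `i` at which `f R`
differs from `e` and outside which `R` misses `e`. -/
lemma exists_edge_subset_rBlock_sdiff (hFR : IsFRPartition H P) (hf : IsSaturatingTriple H P f)
    {R : Finset α} (hR : R ∈ P.Rfam) (he : e ∈ H.edges) (heR : (evset e ∩ R).card < 2)
    (hfe : ∃ i, f i R ≠ ecoord e i) :
    ∃ d ∈ H.edges, evset d ⊆ rBlock f R \ evset e := by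
  obtain ⟨r, hr, rfl⟩ := hFR.exists_isTransversal hR
  have heT := TriSys.isTransversal_of_mem_edges he
  have hfR (i : Fin 3) : f i (evset r) ∈ P.W ∩ H.cls i := ((hf i).2 _ hR).1
  obtain ⟨i, hfi, hri⟩ :
      ∃ i, f i (evset r) ≠ ecoord e i ∧ ∀ j ≠ i, ecoord r j ≠ ecoord e j := by
    by_cases h : ∃ i, ecoord e i = ecoord r i
    · obtain ⟨i, hi⟩ := h
      refine ⟨i, fun h' => hFR.notMem_of_mem_W hR (mem_inter.mp (hfR i)).1 ?_,
        fun j hji hj => ?_⟩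
      · exact mem_evset_iff.mpr ⟨i, (h'.trans hi).symm⟩
      · rw [heT.card_evset_inter hr] at heR
        exact heR.not_ge
          (one_lt_card.mpr ⟨i, by simpa using hi, j, by simpa using hj.symm, hji.symm⟩)
    · obtain ⟨i, hi⟩ := hfe
      exact ⟨i, hi, fun j _ hj => h ⟨j, hj.symm⟩⟩
  obtain ⟨d, hd, hdr⟩ := TriSys.exists_edge_ecoord_eq_update_of_rAdj hr
    (mem_inter.mp (hfR i)).2 (hFR.notMem_of_mem_W hR (mem_inter.mp (hfR i)).1) ((hf i).2 _ hR).2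
  refine ⟨d, hd, subset_sdiff.mpr ⟨?_, ?_⟩⟩
  · rw [evset_eq_image_ecoord d, hdr, rBlock]
    intro u hu
    obtain ⟨j, -, rfl⟩ := mem_image.mp hu
    rcases eq_or_ne j i with rfl | hji
    · simp
    · rw [Function.update_of_ne hji]
      exact mem_union_left _ (mem_evset_iff.mpr ⟨j, rfl⟩)
  · rw [(TriSys.isTransversal_of_mem_edges hd).disjoint_evset_iff heT, hdr]
    intro j
    rcases eq_or_ne j i with rfl | hji
    · simpa using hfi
    · simpa [Function.update_of_ne hji] using hri j hji

lemma exists_edge_subset_block_sdiff (hFR : IsFRPartition H P) (hf : IsSaturatingTriple H P f)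
    (he : e ∈ H.edges) (hnF : ∀ A ∈ P.Ffam, ¬ evset e ⊆ A)
    (hnR : ∀ R ∈ P.Rfam, (evset e ∩ R).card < 2) {k : Finset α ⊕ Finset α}
    (hk : k ∈ P.Ffam.disjSum P.Rfam) (hfe : ∀ R, k = .inr R → ∃ i, f i R ≠ ecoord e i) :
    ∃ d ∈ H.edges, evset d ⊆ block f k \ evset e := by
  rcases k with A | R
  · have hA := inl_mem_disjSum.mp hk
    exact TriSys.exists_edge_subset_sdiff_of_isMultiFano (hFR.2.2.2.2.2.2.1 A hA) he (hnF A hA)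
  · have hR := inr_mem_disjSum.mp hk
    exact hFR.exists_edge_subset_rBlock_sdiff hf hR he (hnR R hR) (hfe R rfl)

lemma exists_disjoint_edges_subset_rBlock (hFR : IsFRPartition H P)
    (hf : IsSaturatingTriple H P f) (hprop : IsProper H P) {R : Finset α} (hR : R ∈ P.Rfam)
    (he : e ∈ H.edges) (hfe : ∀ i, f i R = ecoord e i) :
    ∃ g ∈ H.edges, ∃ g' ∈ H.edges, evset g ⊆ rBlock f R ∧ evset g' ⊆ rBlock f R ∧
      Disjoint (evset g) (evset g') := by
  obtain ⟨r, hr, rfl⟩ := hFR.exists_isTransversal hR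
  have heT := TriSys.isTransversal_of_mem_edges he
  have heW (i : Fin 3) : ecoord e i ∈ P.W := hfe i ▸ (mem_inter.mp ((hf i).2 _ hR).1).1
  have her (i : Fin 3) : ecoord e i ∉ evset r := hFR.notMem_of_mem_W hR (heW i)
  have hsub := TriSys.fanoEdges_subset_inducedEdges hr he her fun i => hfe i ▸ ((hf i).2 _ hR).2
  have hne : inducedEdges H (evset e ∪ evset r) ≠ FanoEdges e.1 e.2.1 e.2.2 r.1 r.2.1 r.2.2 := by
    intro heq
    refine hprop ⟨_, hR, e, he, fun u hu => ?_, e.1, e.2.1, e.2.2, r.1, r.2.1, r.2.2,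
      heT 0, hr 0, heT 1, hr 1, heT 2, hr 2, fun h => her 0 (mem_evset_iff.mpr ⟨0, h.symm⟩),
      fun h => her 1 (mem_evset_iff.mpr ⟨1, h.symm⟩),
      fun h => her 2 (mem_evset_iff.mpr ⟨2, h.symm⟩), ?_, by rwa [union_comm]⟩
    · obtain ⟨i, rfl⟩ := mem_evset_iff.mp hu
      exact heW i
    · ext u
      simp only [evset, mem_union, mem_insert, mem_singleton]
      tauto
  have hblock : rBlock f (evset r) = evset e ∪ evset r := by
    simp only [rBlock, hfe, evset_eq_image_ecoord e, union_comm]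
  rw [hblock]
  exact TriSys.exists_disjoint_edges_of_fanoEdges_ssubset heT hr
    (fun i h => her i (mem_evset_iff.mpr ⟨i, h.symm⟩)) (ssubset_of_subset_of_ne hsub hne.symm)

lemma card_add_card_lt_nu_of_forall_exists_ne (hFR : IsFRPartition H P)
    (hf : IsSaturatingTriple H P f) (he : e ∈ H.edges) (hnF : ∀ A ∈ P.Ffam, ¬ evset e ⊆ A)
    (hnR : ∀ R ∈ P.Rfam, (evset e ∩ R).card < 2) (hfe : ∀ R ∈ P.Rfam, ∃ i, f i R ≠ ecoord e i) :
    P.Ffam.card + P.Rfam.card < H.nu := by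
  have h := TriSys.card_add_card_le_nu (TriSys.isMatching_singleton he)
    ((hFR.pairwiseDisjoint_block hf).mono fun k => sdiff_subset (t := evset e))
    (fun k hk => hFR.exists_edge_subset_block_sdiff hf he hnF hnR hk
      fun R hkR => hfe R (inr_mem_disjSum.mp (hkR ▸ hk)))
    (fun g hg k _ => mem_singleton.mp hg ▸ disjoint_sdiff_self_right)
  rw [card_singleton, card_disjSum] at h
  omega

lemma card_add_card_lt_nu_of_eq (hFR : IsFRPartition H P) (hf : IsSaturatingTriple H P f)
    (hprop : IsProper H P) (he : e ∈ H.edges) (hnF : ∀ A ∈ P.Ffam, ¬ evset e ⊆ A)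
    (hnR : ∀ R ∈ P.Rfam, (evset e ∩ R).card < 2) {R₀ : Finset α} (hR₀ : R₀ ∈ P.Rfam)
    (hfe : ∀ i, f i R₀ = ecoord e i) :
    P.Ffam.card + P.Rfam.card < H.nu := by
  obtain ⟨g, hg, g', hg', hgR₀, hg'R₀, hgg'⟩ :=
    hFR.exists_disjoint_edges_subset_rBlock hf hprop hR₀ he hfe
  have hsub : P.Ffam.disjSum (P.Rfam.erase R₀) ⊆ P.Ffam.disjSum P.Rfam :=
    disjSum_mono subset_rfl (erase_subset _ _)
  have hblocks := hFR.pairwiseDisjoint_block hf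
  have hR₀k {k} (hk : k ∈ P.Ffam.disjSum (P.Rfam.erase R₀)) :
      Disjoint (rBlock f R₀) (block f k) := by
    refine hblocks (inr_mem_disjSum.mpr hR₀) (hsub hk) fun h => ?_
    rw [← h, inr_mem_disjSum] at hk
    exact notMem_erase R₀ _ hk
  have h := TriSys.card_add_card_le_nu (TriSys.isMatching_pair hg hg' hgg')
    ((hblocks.subset hsub).mono fun k => sdiff_subset (t := evset e))
    (fun k hk => hFR.exists_edge_subset_block_sdiff hf he hnF hnR (hsub hk) fun R hkR => by
      rw [hkR, inr_mem_disjSum] at hk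
      refine ⟨0, fun h0 => ne_of_mem_erase hk ((hf 0).1 (mem_of_mem_erase hk) hR₀ ?_)⟩
      rw [h0, hfe])
    (fun u hu k hk => by
      refine ((hR₀k hk).mono_right sdiff_subset).mono_left ?_
      rcases mem_insert.mp hu with rfl | hu
      exacts [hgR₀, mem_singleton.mp hu ▸ hg'R₀])
  rw [card_pair (ne_of_disjoint_evset hgg'), card_disjSum, card_erase_of_mem hR₀] at h
  have := card_pos.mpr ⟨R₀, hR₀⟩
  omega

lemma edgeHome_of_isProper (hFR : IsFRPartition H P) (hM : IsMatchable H P)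
    (hprop : IsProper H P) : EdgeHome H P := by
  intro e he
  by_contra hhome
  obtain ⟨hnF, hnR⟩ :
      (∀ A ∈ P.Ffam, ¬ evset e ⊆ A) ∧ ∀ R ∈ P.Rfam, (evset e ∩ R).card < 2 := by
    simpa [not_or] using hhome
  obtain ⟨f, hf⟩ : ∃ f, IsSaturatingTriple H P f := Classical.skolem.mp hM
  have hlt : P.Ffam.card + P.Rfam.card < H.nu := by
    by_cases hbad : ∃ R ∈ P.Rfam, ∀ i, f i R = ecoord e i
    · obtain ⟨R₀, hR₀, hfe⟩ := hbad
      exact hFR.card_add_card_lt_nu_of_eq hf hprop he hnF hnR hR₀ hfe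
    · simp only [not_exists, not_and, not_forall] at hbad
      exact hFR.card_add_card_lt_nu_of_forall_exists_ne hf he hnF hnR hbad
  exact hlt.ne hFR.2.2.2.2.2.2.2.2

end IsFRPartition

/-- A proper matchable FR-partition of a 3-partite 3-graph has the edge-home
property, and is therefore a home-base partition. -/
theorem proper_matchable_edgeHome (H : TriSys α) (P : FRData α)
    (hFR : IsFRPartition H P) (hM : IsMatchable H P)
    (hprop : IsProper H P) :
    EdgeHome H P ∧ IsHomeBasePartition H P := by
  have hEH := hFR.edgeHome_of_isProper hM hprop
  exact ⟨hEH, hFR, hM, hEH⟩
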